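/- arXiv:1206.5784 — 3 statements merged into one kernel-verified Lean document; each statement's English description precedes it below -/
import Mathlib

section
/- For differential 1-forms ω₁,…,ω_{m'+m''} on a manifold M and a piecewise smooth path γ : [0,1] → M, the product of the iterated integrals ∫_γ ω₁⋯ω_{m'} and ∫_γ ω_{m'+1}⋯ω_{m'+m''} equals the sum over all (m',m'')-shuffles ρ of ∫_γ ω_{ρ(1)}⋯ω_{ρ(m'+m'')}. -/
open MeasureTheory

/-- The open ordered simplex `{0 < t₁ < ⋯ < t_n < 1}` in `ℝⁿ`. -/
def simplex (n : ℕ) : Set (Fin n → ℝ) :=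
  {t | (∀ i, t i ∈ Set.Ioo (0 : ℝ) 1) ∧ StrictMono t}

/-- The iterated integral `∫_{0<t₁<⋯<t_n<1} f₁(t₁)⋯f_n(t_n) dt₁⋯dt_n`. -/
noncomputable def iint (n : ℕ) (f : Fin n → ℝ → ℝ) : ℝ :=
  ∫ t in simplex n, ∏ i, f i (t i)

/-- An `(m',m'')`-shuffle: a permutation of `{1,…,m'+m''}` increasing on the
first `m'` letters and on the last `m''` letters. -/
def IsShuffle (m' m'' : ℕ) (ρ : Equiv.Perm (Fin (m' + m''))) : Prop :=
  (∀ i j : Fin m', i < j → ρ (Fin.castAdd m'' i) < ρ (Fin.castAdd m'' j)) ∧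
  (∀ i j : Fin m'', i < j → ρ (Fin.natAdd m' i) < ρ (Fin.natAdd m' j))

instance (m' m'' : ℕ) : DecidablePred (IsShuffle m' m'') := fun ρ => by
  unfold IsShuffle; infer_instance

lemma measurableSet_simplex (n : ℕ) : MeasurableSet (simplex n) := by
  have h : simplex n = (⋂ i, (fun t : Fin n → ℝ => t i) ⁻¹' Set.Ioo 0 1) ∩
      ⋂ (i : Fin n), ⋂ (j : Fin n), ⋂ (_ : i < j), {t : Fin n → ℝ | t i < t j} := by
    ext t
    simp only [simplex, Set.mem_setOf_eq, Set.mem_inter_iff, Set.mem_iInter, Set.mem_preimage]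
    exact and_congr Iff.rfl ⟨fun h i j hij => h hij, fun h a b hab => h a b hab⟩
  rw [h]
  exact (MeasurableSet.iInter fun i => measurable_pi_apply i measurableSet_Ioo).inter
    (MeasurableSet.iInter fun i => MeasurableSet.iInter fun j => MeasurableSet.iInter fun _ =>
      measurableSet_lt (measurable_pi_apply i) (measurable_pi_apply j))

lemma null_pair {n : ℕ} (i j : Fin n) (hij : i ≠ j) :
    volume {u : Fin n → ℝ | u i = u j} = 0 := by
  set L : (Fin n → ℝ) →ₗ[ℝ] ℝ :=
    (LinearMap.proj i : (Fin n → ℝ) →ₗ[ℝ] ℝ) - (LinearMap.proj j : (Fin n → ℝ) →ₗ[ℝ] ℝ)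
    with hL
  have hset : {u : Fin n → ℝ | u i = u j} = (LinearMap.ker L : Set (Fin n → ℝ)) := by
    ext u
    simp [hL, LinearMap.mem_ker, sub_eq_zero]
  rw [hset]
  refine Measure.addHaar_submodule _ _ ?_
  intro htop
  have h1 : (Pi.single i 1 : Fin n → ℝ) ∈ LinearMap.ker L := htop ▸ Submodule.mem_top
  simp [hL, LinearMap.mem_ker, Pi.single_eq_same, Pi.single_eq_of_ne hij.symm] at h1

/-- Shuffle relation for iterated path integrals (Chen):
`(∫_γ ω₁⋯ω_{m'})·(∫_γ ω_{m'+1}⋯ω_{m'+m''}) = Σ_{ρ ∈ Sh(m',m'')} ∫_γ ω_{ρ⁻¹(1)}⋯ω_{ρ⁻¹(m'+m'')}`,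
stated concretely for the pullbacks `f_i(t) dt = γ*ω_i`, `f_i` smooth on `[0,1]`. -/
theorem iterated_integral_shuffle (m' m'' : ℕ) (f : Fin (m' + m'') → ℝ → ℝ)
    (hf : ∀ i, ContDiff ℝ (⊤ : ℕ∞) (f i)) :
    iint m' (fun i => f (Fin.castAdd m'' i)) * iint m'' (fun i => f (Fin.natAdd m' i)) =
      ∑ ρ ∈ Finset.univ.filter (IsShuffle m' m''),
        iint (m' + m'') (fun i => f (ρ.symm i)) := by
  classical
  set F : (Fin (m' + m'') → ℝ) → ℝ := fun u => ∏ j, f j (u j) with hF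
  -- the coordinate-permuting measurable equivalences
  set eρ : Equiv.Perm (Fin (m' + m'')) → ((Fin (m' + m'') → ℝ) ≃ᵐ (Fin (m' + m'') → ℝ)) :=
    fun ρ => MeasurableEquiv.piCongrLeft (fun _ => ℝ) ρ with heρdef
  have heρ : ∀ (ρ : Equiv.Perm (Fin (m' + m''))) (u : Fin (m' + m'') → ℝ) (j : Fin (m' + m'')),
      eρ ρ u j = u (ρ.symm j) := by
    intro ρ u j
    have h := MeasurableEquiv.piCongrLeft_apply_apply (β := fun _ : Fin (m' + m'') => ℝ)
      ρ u (ρ.symm j)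
    simpa using h
  set T : Equiv.Perm (Fin (m' + m'')) → Set (Fin (m' + m'') → ℝ) :=
    fun ρ => eρ ρ ⁻¹' simplex (m' + m'') with hTdef
  have hTset : ∀ ρ, T ρ = {u | (∀ j, u j ∈ Set.Ioo (0:ℝ) 1) ∧
      StrictMono (fun j => u (ρ.symm j))} := by
    intro ρ
    ext u
    have h : eρ ρ u = fun j => u (ρ.symm j) := funext fun j => heρ ρ u j
    simp only [hTdef, Set.mem_preimage, simplex, Set.mem_setOf_eq, h]
    constructor
    · rintro ⟨h1, h2⟩
      exact ⟨fun j => by simpa using h1 (ρ j), h2⟩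
    · rintro ⟨h1, h2⟩
      exact ⟨fun i => h1 _, h2⟩
  -- change of variables on each piece
  have hT_int : ∀ ρ : Equiv.Perm (Fin (m' + m'')),
      (∫ u in T ρ, F u) = iint (m' + m'') (fun i => f (ρ.symm i)) := by
    intro ρ
    have hmp : MeasurePreserving (eρ ρ) volume volume :=
      volume_measurePreserving_piCongrLeft _ ρ
    have key := hmp.setIntegral_preimage_emb (eρ ρ).measurableEmbedding
      (fun v => ∏ i, f (ρ.symm i) (v i)) (simplex (m' + m''))
    have hfun : (fun u : Fin (m' + m'') → ℝ => ∏ i, f (ρ.symm i) (eρ ρ u i)) = F := by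
      funext u
      calc ∏ i, f (ρ.symm i) (eρ ρ u i) = ∏ i, f (ρ.symm i) (u (ρ.symm i)) := by
            simp only [heρ]
        _ = ∏ j, f j (u j) := Equiv.prod_comp ρ.symm (fun j => f j (u j))
    rw [iint, ← key, hfun]
  -- measurability and integrability
  have hTmeas : ∀ ρ, MeasurableSet (T ρ) :=
    fun ρ => (eρ ρ).measurable (measurableSet_simplex (m' + m''))
  have hcont : Continuous F := by
    apply continuous_finset_prod
    intro j _
    have h := ((hf j).continuous).comp
      (continuous_apply (A := fun _ : Fin (m' + m'') => ℝ) j)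
    simpa [Function.comp_def] using h
  have hK : IsCompact (Set.univ.pi fun _ : Fin (m' + m'') => Set.Icc (0:ℝ) 1) :=
    isCompact_univ_pi fun _ => isCompact_Icc
  have hint : ∀ ρ, IntegrableOn F (T ρ) volume := by
    intro ρ
    refine (hcont.continuousOn.integrableOn_compact hK).mono_set ?_
    intro u hu
    rw [hTset] at hu
    exact Set.mem_univ_pi.mpr fun j => Set.Ioo_subset_Icc_self (hu.1 j)
  -- the product side as an integral over S
  set eS : (Fin m' ⊕ Fin m'' → ℝ) ≃ᵐ (Fin (m' + m'') → ℝ) :=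
    MeasurableEquiv.piCongrLeft (fun _ => ℝ) finSumFinEquiv with heSdef
  set eP : (Fin m' ⊕ Fin m'' → ℝ) ≃ᵐ ((Fin m' → ℝ) × (Fin m'' → ℝ)) :=
    MeasurableEquiv.sumPiEquivProdPi (fun _ => ℝ) with hePdef
  set e0 : (Fin (m' + m'') → ℝ) ≃ᵐ ((Fin m' → ℝ) × (Fin m'' → ℝ)) :=
    eS.symm.trans eP with he0def
  have he0 : ∀ u : Fin (m' + m'') → ℝ,
      e0 u = (fun i => u (Fin.castAdd m'' i), fun i => u (Fin.natAdd m' i)) := by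
    intro u
    have h1 : ∀ s, eS.symm u s = u (finSumFinEquiv s) := fun s =>
      Equiv.piCongrLeft_symm_apply (fun _ => ℝ) finSumFinEquiv u s
    have h2 : e0 u = (fun i => eS.symm u (Sum.inl i), fun i => eS.symm u (Sum.inr i)) := rfl
    rw [h2]
    refine Prod.ext ?_ ?_
    · funext i
      show eS.symm u (Sum.inl i) = u (Fin.castAdd m'' i)
      rw [h1, finSumFinEquiv_apply_left]
    · funext i
      show eS.symm u (Sum.inr i) = u (Fin.natAdd m' i)
      rw [h1, finSumFinEquiv_apply_right]
  have hmp0 : MeasurePreserving e0 volume volume := by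
    have h1 : MeasurePreserving eS.symm volume volume :=
      (volume_measurePreserving_piCongrLeft _ finSumFinEquiv).symm eS
    have h2 : MeasurePreserving eP volume volume :=
      volume_measurePreserving_sumPiEquivProdPi _
    exact h2.comp h1
  set S : Set (Fin (m' + m'') → ℝ) := e0 ⁻¹' (simplex m' ×ˢ simplex m'') with hSdef
  have hSmem : ∀ u : Fin (m' + m'') → ℝ, u ∈ S ↔
      ((fun i => u (Fin.castAdd m'' i)) ∈ simplex m' ∧
       (fun i => u (Fin.natAdd m' i)) ∈ simplex m'') := by
    intro u
    rw [hSdef, Set.mem_preimage, he0 u, Set.mem_prod]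
  have hLHS : iint m' (fun i => f (Fin.castAdd m'' i)) * iint m'' (fun i => f (Fin.natAdd m' i))
      = ∫ u in S, F u := by
    rw [iint, iint, ← setIntegral_prod_mul (μ := volume) (ν := volume)
      (fun x : Fin m' → ℝ => ∏ i, f (Fin.castAdd m'' i) (x i))
      (fun y : Fin m'' → ℝ => ∏ i, f (Fin.natAdd m' i) (y i)) (simplex m') (simplex m'')]
    rw [← Measure.volume_eq_prod]
    rw [← hmp0.setIntegral_preimage_emb e0.measurableEmbedding
      (fun z : (Fin m' → ℝ) × (Fin m'' → ℝ) =>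
        (∏ i, f (Fin.castAdd m'' i) (z.1 i)) * ∏ i, f (Fin.natAdd m' i) (z.2 i))
      (simplex m' ×ˢ simplex m'')]
    refine setIntegral_congr_fun
      (hmp0.measurable ((measurableSet_simplex m').prod (measurableSet_simplex m''))) ?_
    intro u _
    simp only [he0 u, hF]
    exact (Fin.prod_univ_add fun j => f j (u j)).symm
  -- disjointness of the pieces
  have hdisj : (↑(Finset.univ.filter (IsShuffle m' m'')) :
      Set (Equiv.Perm (Fin (m' + m'')))).Pairwise (Function.onFun Disjoint T) := by
    intro ρ _ ρ' _ hne
    rw [Function.onFun, Set.disjoint_left]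
    intro u hu hu'
    rw [hTset] at hu hu'
    obtain ⟨hbox, hm⟩ := hu
    obtain ⟨-, hm'⟩ := hu'
    have hinj : Function.Injective u := by
      intro a b hab
      have h1 : (fun j => u (ρ.symm j)) (ρ a) = (fun j => u (ρ.symm j)) (ρ b) := by
        simpa using hab
      simpa using ρ.injective (hm.injective h1)
    have hrange : Set.range (fun j => u (ρ.symm j)) = Set.range (fun j => u (ρ'.symm j)) := by
      have r1 : Set.range (fun j => u (ρ.symm j)) = Set.range u :=
        ρ.symm.surjective.range_comp u
      have r2 : Set.range (fun j => u (ρ'.symm j)) = Set.range u :=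
        ρ'.symm.surjective.range_comp u
      rw [r1, r2]
    have heq : (fun j => u (ρ.symm j)) = fun j => u (ρ'.symm j) :=
      (hm.range_inj hm').mp hrange
    apply hne
    have hss : ρ.symm = ρ'.symm := Equiv.ext fun j => hinj (congrFun heq j)
    have := congrArg Equiv.symm hss
    simpa using this
  -- union of the pieces covers S up to a null set
  have hsub : ∀ ρ ∈ Finset.univ.filter (IsShuffle m' m''), T ρ ⊆ S := by
    intro ρ hρ u hu
    rw [Finset.mem_filter] at hρ
    obtain ⟨-, hsh⟩ := hρ
    rw [hTset] at hu
    obtain ⟨hbox, hm⟩ := hu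
    rw [hSmem]
    constructor
    · refine ⟨fun i => hbox _, fun i j hij => ?_⟩
      have h1 := hm (hsh.1 i j hij)
      simpa using h1
    · refine ⟨fun i => hbox _, fun i j hij => ?_⟩
      have h1 := hm (hsh.2 i j hij)
      simpa using h1
  set N : Set (Fin (m' + m'') → ℝ) :=
    ⋃ p : Fin (m' + m'') × Fin (m' + m''), ⋃ (_ : p.1 ≠ p.2), {u | u p.1 = u p.2} with hNdef
  have hNnull : volume N = 0 := by
    refine measure_iUnion_null fun p => ?_
    by_cases hp : p.1 = p.2
    · simp [hp]
    · rw [Set.iUnion_eq_if, if_pos hp]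
      exact null_pair p.1 p.2 hp
  have hdiffsub : S \ (⋃ ρ ∈ Finset.univ.filter (IsShuffle m' m''), T ρ) ⊆ N := by
    rintro u ⟨huS, huU⟩
    by_contra hN
    have hinj : Function.Injective u := by
      intro a b hab
      by_contra hne
      exact hN (Set.mem_iUnion.mpr ⟨(a, b), Set.mem_iUnion.mpr ⟨hne, hab⟩⟩)
    apply huU
    set σ : Equiv.Perm (Fin (m' + m'')) := Tuple.sort u with hσdef
    have hsm : StrictMono (u ∘ σ) :=
      (Tuple.monotone_sort u).strictMono_of_injective (hinj.comp σ.injective)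
    set ρ : Equiv.Perm (Fin (m' + m'')) := σ.symm with hρdef
    have hρs : ∀ j, ρ.symm j = σ j := fun j => rfl
    have key : ∀ a b : Fin (m' + m''), u a < u b → ρ a < ρ b := by
      intro a b hab
      rcases lt_trichotomy (ρ a) (ρ b) with h | h | h
      · exact h
      · exact absurd (ρ.injective h ▸ hab) (lt_irrefl _)
      · have h1 := hsm h
        simp only [Function.comp_apply, hρdef, Equiv.apply_symm_apply] at h1
        exact absurd (h1.trans hab) (lt_irrefl _)
    rw [hSmem] at huS
    have hmemT : u ∈ T ρ := by
      rw [hTset]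
      refine ⟨?_, ?_⟩
      · intro j
        exact Fin.addCases (motive := fun j => u j ∈ Set.Ioo (0:ℝ) 1)
          (fun i => huS.1.1 i) (fun i => huS.2.1 i) j
      · intro a b hab
        simp only [hρs]
        exact hsm hab
    have hshuffle : IsShuffle m' m'' ρ :=
      ⟨fun i j hij => key _ _ (huS.1.2 hij), fun i j hij => key _ _ (huS.2.2 hij)⟩
    exact Set.mem_iUnion₂.mpr ⟨ρ, Finset.mem_filter.mpr ⟨Finset.mem_univ _, hshuffle⟩, hmemT⟩
  have hUsub : (⋃ ρ ∈ Finset.univ.filter (IsShuffle m' m''), T ρ) ⊆ S :=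
    Set.iUnion₂_subset hsub
  have hae : S =ᵐ[volume] ⋃ ρ ∈ Finset.univ.filter (IsShuffle m' m''), T ρ := by
    rw [MeasureTheory.ae_eq_set]
    constructor
    · exact measure_mono_null hdiffsub hNnull
    · rw [Set.diff_eq_empty.mpr hUsub]
      exact measure_empty
  rw [hLHS, setIntegral_congr_set hae,
    integral_biUnion_finset _ (fun ρ _ => hTmeas ρ) hdisj (fun ρ _ => hint ρ)]
  exact Finset.sum_congr rfl fun ρ _ => hT_int ρ
end

section
/- Let f₁,…,f_n : [0,1] → ℝ be continuous functions, and let γ₁, γ₂ be such that γ = γ₁·γ₂ is the concatenation at t=1/2 (with each half reparametrized to [0,1]). Then the iterated integral of the n-tuple over γ decomposes as ∫_γ f₁⋯f_n = Σ_{k=0}^{n} (∫_{γ₁} f₁⋯f_k)(∫_{γ₂} f_{k+1}⋯f_n), where ∫_γ f₁⋯f_n denotes ∫_{0<t₁<⋯<t_n<1} f₁(t₁)⋯f_n(t_n) dt₁⋯dt_n with f_i composed with the appropriate reparametrization. -/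
open MeasureTheory

/-- The iterated integral `I(f₀,…,f_{n-1}) = ∫_{0<t₁<⋯<t_n<1} f₀(t₁)⋯f_{n-1}(t_n) dt`,
with the integrands indexed by `ℕ`. -/
noncomputable def iintN (n : ℕ) (f : ℕ → ℝ → ℝ) : ℝ :=
  ∫ t in simplex n, ∏ i : Fin n, f i (t i)

section Aux

def monoBox (n : ℕ) (a b : ℝ) : Set (Fin n → ℝ) :=
  {t | (∀ i, t i ∈ Set.Ioo a b) ∧ StrictMono t}

lemma simplex_eq_monoBox (n : ℕ) : simplex n = monoBox n 0 1 := rfl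

lemma measurableSet_strictMono (n : ℕ) : MeasurableSet {t : Fin n → ℝ | StrictMono t} := by
  have h : {t : Fin n → ℝ | StrictMono t} = ⋂ (i : Fin n) (j : Fin n), {t | i < j → t i < t j} := by
    ext t
    simp only [Set.mem_setOf_eq, Set.mem_iInter, StrictMono]
  rw [h]
  refine MeasurableSet.iInter fun i => MeasurableSet.iInter fun j => ?_
  by_cases h : i < j
  · simp only [h, true_implies]
    exact measurableSet_lt (measurable_pi_apply i) (measurable_pi_apply j)
  · simp [h]

lemma measurableSet_monoBox (n : ℕ) (a b : ℝ) : MeasurableSet (monoBox n a b) := by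
  have h : monoBox n a b = (⋂ i, (fun t : Fin n → ℝ => t i) ⁻¹' Set.Ioo a b) ∩ {t | StrictMono t} := by
    ext t; simp [monoBox]
  rw [h]
  exact (MeasurableSet.iInter fun i => (measurable_pi_apply i) measurableSet_Ioo).inter
    (measurableSet_strictMono n)

def cutSet (n k : ℕ) : Set (Fin n → ℝ) :=
  simplex n ∩ {t | ∀ i : Fin n, ((i : ℕ) < k ↔ t i < 2⁻¹)}

lemma measurableSet_cutSet (n k : ℕ) : MeasurableSet (cutSet n k) := by
  refine (measurableSet_simplex n).inter ?_
  have h : {t : Fin n → ℝ | ∀ i : Fin n, ((i:ℕ) < k ↔ t i < 2⁻¹)}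
      = ⋂ i : Fin n, {t | ((i:ℕ) < k ↔ t i < 2⁻¹)} := by ext t; simp
  rw [h]
  refine MeasurableSet.iInter fun i => ?_
  by_cases h : (i:ℕ) < k
  · simp only [h, true_iff]
    exact measurableSet_lt (measurable_pi_apply i) measurable_const
  · simp only [h, false_iff, not_lt]
    exact measurableSet_le measurable_const (measurable_pi_apply i)

lemma simplex_eq_biUnion (n : ℕ) : simplex n = ⋃ k ∈ Finset.range (n+1), cutSet n k := by
  ext t
  simp only [Set.mem_iUnion, Finset.mem_range, cutSet, Set.mem_inter_iff, Set.mem_setOf_eq,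
    exists_prop]
  constructor
  · intro ht
    by_cases hall : ∀ i : Fin n, t i < 2⁻¹
    · exact ⟨n, by omega, ht, fun i => ⟨fun _ => hall i, fun _ => i.isLt⟩⟩
    · push_neg at hall
      obtain ⟨i₁, hi₁⟩ := hall
      have hne : (Finset.univ.filter (fun i : Fin n => 2⁻¹ ≤ t i)).Nonempty :=
        ⟨i₁, by simp [hi₁]⟩
      set i₀ := Finset.min' _ hne with hi₀
      refine ⟨(i₀ : ℕ), by omega, ht, fun i => ⟨?_, ?_⟩⟩
      · intro hik
        by_contra hcon
        push_neg at hcon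
        have hle : i₀ ≤ i := Finset.min'_le _ _ (by simp [hcon])
        exact absurd hik (by simpa using Fin.le_def.mp hle)
      · intro hti
        by_contra hcon
        push_neg at hcon
        have h0 : 2⁻¹ ≤ t i₀ := by
          have := Finset.min'_mem _ hne
          simpa using this
        have hle : t i₀ ≤ t i := ht.2.monotone (Fin.le_def.mpr hcon)
        linarith
  · rintro ⟨k, _, ht, _⟩; exact ht

lemma cutSet_disjoint (n : ℕ) :
    Set.Pairwise ↑(Finset.range (n+1)) (Function.onFun Disjoint (cutSet n)) := by
  have key : ∀ k k', k < k' → k' < n + 1 → Disjoint (cutSet n k) (cutSet n k') := by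
    intro k k' h hk'
    rw [Set.disjoint_left]
    rintro t ⟨ht, hcut⟩ ⟨ht', hcut'⟩
    have hkn : k < n := by omega
    have hlt : t ⟨k, hkn⟩ < 2⁻¹ := (hcut' ⟨k, hkn⟩).mp (by simpa using h)
    have := (hcut ⟨k, hkn⟩).mpr hlt
    simp at this
  intro k hk k' hk' hne
  simp only [Finset.coe_range, Set.mem_Iio] at hk hk'
  rcases lt_or_gt_of_ne hne with h | h
  · exact key k k' h hk'
  · exact (key k' k h hk).symm

def Bset (k m : ℕ) : Set (Fin (k+m) → ℝ) :=
  {t | (∀ i : Fin (k+m), (i:ℕ) < k → t i ∈ Set.Ioo (0:ℝ) 2⁻¹) ∧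
       (∀ i : Fin (k+m), k ≤ (i:ℕ) → t i ∈ Set.Ioo (2⁻¹:ℝ) 1) ∧ StrictMono t}

lemma Bset_subset_cutSet (k m : ℕ) : Bset k m ⊆ cutSet (k+m) k := by
  rintro t ⟨h1, h2, h3⟩
  refine ⟨⟨fun i => ?_, h3⟩, fun i => ⟨fun hik => (h1 i hik).2, fun hti => ?_⟩⟩
  · rcases lt_or_ge (i:ℕ) k with hi | hi
    · have h4 := h1 i hi
      refine ⟨h4.1, ?_⟩
      have : t i < 2⁻¹ := h4.2
      linarith
    · have h4 := h2 i hi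
      refine ⟨?_, h4.2⟩
      have : (2⁻¹:ℝ) < t i := h4.1
      linarith
  · by_contra hcon
    push_neg at hcon
    have := (h2 i hcon).1
    linarith

lemma cutSet_ae_eq (k m : ℕ) : cutSet (k+m) k =ᵐ[volume] Bset k m := by
  rw [MeasureTheory.ae_eq_set]
  constructor
  · have hnull : volume (⋃ i : Fin (k+m), {t : Fin (k+m) → ℝ | t i = 2⁻¹}) = 0 := by
      refine measure_iUnion_null fun i => ?_
      rw [MeasureTheory.volume_pi]
      exact MeasureTheory.Measure.pi_hyperplane _ i _
    refine measure_mono_null (fun t ht => ?_) hnull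
    obtain ⟨⟨⟨hIoo, hmono⟩, hiff⟩, hnB⟩ := ht
    have hA : ∀ i : Fin (k+m), (i:ℕ) < k → t i ∈ Set.Ioo (0:ℝ) 2⁻¹ :=
      fun i hi => ⟨(hIoo i).1, (hiff i).mp hi⟩
    by_cases hB : ∀ i : Fin (k+m), k ≤ (i:ℕ) → t i ∈ Set.Ioo (2⁻¹:ℝ) 1
    · exact absurd ⟨hA, hB, hmono⟩ hnB
    · push_neg at hB
      obtain ⟨i, hki, hio⟩ := hB
      have h1 : t i < 1 := (hIoo i).2
      have h2 : ¬ t i < 2⁻¹ := fun hh => by have := (hiff i).mpr hh; omega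
      have h3 : t i = 2⁻¹ := by
        rcases lt_or_ge (2⁻¹:ℝ) (t i) with hh | hh
        · exact absurd ⟨hh, h1⟩ hio
        · linarith [not_lt.mp h2]
      exact Set.mem_iUnion.mpr ⟨i, h3⟩
  · rw [Set.diff_eq_empty.mpr (Bset_subset_cutSet k m)]
    simp

lemma append_lt {k m : ℕ} (s : Fin k → ℝ) (u : Fin m → ℝ) (i : Fin (k+m)) (hi : (i:ℕ) < k) :
    Fin.append s u i = s ⟨(i:ℕ), hi⟩ := by
  have h : i = Fin.castAdd m ⟨(i:ℕ), hi⟩ := by ext; rfl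
  conv_lhs => rw [h]
  exact Fin.append_left s u _

lemma append_ge {k m : ℕ} (s : Fin k → ℝ) (u : Fin m → ℝ) (i : Fin (k+m)) (hi : k ≤ (i:ℕ)) :
    Fin.append s u i = u ⟨(i:ℕ) - k, by have := i.isLt; omega⟩ := by
  have h : i = Fin.natAdd k ⟨(i:ℕ) - k, by have := i.isLt; omega⟩ := by
    ext; simp; omega
  conv_lhs => rw [h]
  exact Fin.append_right s u _

lemma append_mem_Bset_iff {k m : ℕ} (s : Fin k → ℝ) (u : Fin m → ℝ) :
    Fin.append s u ∈ Bset k m ↔ s ∈ monoBox k 0 2⁻¹ ∧ u ∈ monoBox m 2⁻¹ 1 := by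
  constructor
  · rintro ⟨h1, h2, h3⟩
    refine ⟨⟨fun i => ?_, fun a b hab => ?_⟩, ⟨fun j => ?_, fun a b hab => ?_⟩⟩
    · have := h1 (Fin.castAdd m i) (by simp)
      rwa [Fin.append_left] at this
    · have := h3 (show Fin.castAdd m a < Fin.castAdd m b by
        rw [Fin.lt_def]; exact Fin.lt_def.mp hab)
      rwa [Fin.append_left, Fin.append_left] at this
    · have := h2 (Fin.natAdd k j) (by simp)
      rwa [Fin.append_right] at this
    · have := h3 (show Fin.natAdd k a < Fin.natAdd k b by
        rw [Fin.lt_def]; exact Nat.add_lt_add_left (Fin.lt_def.mp hab) k)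
      rwa [Fin.append_right, Fin.append_right] at this
  · rintro ⟨⟨hs1, hs2⟩, hu1, hu2⟩
    refine ⟨fun i hi => ?_, fun i hi => ?_, fun a b hab => ?_⟩
    · rw [append_lt s u i hi]; exact hs1 _
    · rw [append_ge s u i hi]; exact hu1 _
    · have hab' : (a:ℕ) < (b:ℕ) := Fin.lt_def.mp hab
      rcases lt_or_ge (a:ℕ) k with ha | ha <;> rcases lt_or_ge (b:ℕ) k with hb | hb
      · rw [append_lt s u a ha, append_lt s u b hb]
        exact hs2 (Fin.mk_lt_mk.mpr hab')
      · rw [append_lt s u a ha, append_ge s u b hb]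
        exact lt_trans (hs1 _).2 (hu1 _).1
      · omega
      · rw [append_ge s u a ha, append_ge s u b hb]
        exact hu2 (Fin.mk_lt_mk.mpr (by omega))

noncomputable def Phi (k m : ℕ) : ((Fin k → ℝ) × (Fin m → ℝ)) ≃ᵐ (Fin (k+m) → ℝ) :=
  (MeasurableEquiv.sumPiEquivProdPi (fun _ : Fin k ⊕ Fin m => ℝ)).symm.trans
    (MeasurableEquiv.piCongrLeft (fun _ : Fin (k+m) => ℝ) finSumFinEquiv)

lemma Phi_apply (k m : ℕ) (s : Fin k → ℝ) (u : Fin m → ℝ) :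
    Phi k m (s, u) = Fin.append s u := by
  funext i
  obtain ⟨j, rfl⟩ : ∃ j, finSumFinEquiv j = i := ⟨finSumFinEquiv.symm i, by simp⟩
  show (MeasurableEquiv.piCongrLeft (fun _ : Fin (k+m) => ℝ) finSumFinEquiv)
      ((MeasurableEquiv.sumPiEquivProdPi (fun _ : Fin k ⊕ Fin m => ℝ)).symm (s, u))
      (finSumFinEquiv j) = _
  rw [MeasurableEquiv.piCongrLeft_apply_apply]
  rcases j with j | j
  · simp [MeasurableEquiv.coe_sumPiEquivProdPi_symm, Equiv.sumPiEquivProdPi_symm_apply,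
      finSumFinEquiv_apply_left, Fin.append_left]
  · simp [MeasurableEquiv.coe_sumPiEquivProdPi_symm, Equiv.sumPiEquivProdPi_symm_apply,
      finSumFinEquiv_apply_right, Fin.append_right]

lemma Phi_measurePreserving (k m : ℕ) :
    MeasurePreserving (Phi k m) volume volume :=
  ((volume_measurePreserving_piCongrLeft (fun _ : Fin (k+m) => ℝ) finSumFinEquiv).comp
    (volume_measurePreserving_sumPiEquivProdPi_symm (fun _ : Fin k ⊕ Fin m => ℝ)))

lemma Bset_integral (k m : ℕ) (f : ℕ → ℝ → ℝ) :
    ∫ t in Bset k m, ∏ i : Fin (k+m), f i (t i) =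
      (∫ s in monoBox k 0 2⁻¹, ∏ i : Fin k, f i (s i)) *
      ∫ u in monoBox m 2⁻¹ 1, ∏ i : Fin m, f (k + i) (u i) := by
  rw [← (Phi_measurePreserving k m).setIntegral_preimage_emb (Phi k m).measurableEmbedding
    (fun t => ∏ i : Fin (k+m), f i (t i)) (Bset k m)]
  have hpre : (Phi k m) ⁻¹' Bset k m = (monoBox k 0 2⁻¹) ×ˢ (monoBox m 2⁻¹ 1) := by
    ext p
    obtain ⟨s, u⟩ := p
    rw [Set.mem_preimage, Phi_apply, append_mem_Bset_iff, Set.mem_prod]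
  rw [hpre]
  have hsplit : ∀ p : (Fin k → ℝ) × (Fin m → ℝ),
      (∏ i : Fin (k+m), f i (Phi k m p i)) =
      (∏ i : Fin k, f i (p.1 i)) * ∏ i : Fin m, f (k + i) (p.2 i) := by
    rintro ⟨s, u⟩
    rw [Phi_apply, Fin.prod_univ_add]
    simp [Fin.append_left, Fin.append_right]
  simp_rw [hsplit]
  rw [Measure.volume_eq_prod]
  exact setIntegral_prod_mul (fun s : Fin k → ℝ => ∏ i : Fin k, f i (s i))
    (fun u : Fin m → ℝ => ∏ i : Fin m, f (k + (i:ℕ)) (u i)) _ _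

lemma lowInt (k : ℕ) (g : ℕ → ℝ → ℝ) :
    ∫ s in monoBox k 0 2⁻¹, ∏ i : Fin k, g i (s i)
      = iintN k (fun i t => g i (t / 2) * (1 / 2)) := by
  set G : (Fin k → ℝ) → ℝ := fun t => ∏ i : Fin k, g i (t i) with hG
  have hpre : (fun x : Fin k → ℝ => (2⁻¹ : ℝ) • x) ⁻¹' (monoBox k 0 2⁻¹) = simplex k := by
    ext x
    simp only [monoBox, simplex, Set.mem_preimage, Set.mem_setOf_eq, Set.mem_Ioo, Pi.smul_apply,
      smul_eq_mul]
    constructor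
    · rintro ⟨h1, h2⟩
      refine ⟨fun i => ⟨by nlinarith [(h1 i).1], by nlinarith [(h1 i).2]⟩, fun a b hab => ?_⟩
      have h3 := h2 hab
      simp only [Pi.smul_apply, smul_eq_mul] at h3
      linarith
    · rintro ⟨h1, h2⟩
      refine ⟨fun i => ⟨by nlinarith [(h1 i).1], by nlinarith [(h1 i).2]⟩, fun a b hab => ?_⟩
      simp only [Pi.smul_apply, smul_eq_mul]
      have h3 := h2 hab
      linarith
  have hind : ∀ x : Fin k → ℝ, (monoBox k 0 2⁻¹).indicator G ((2⁻¹:ℝ) • x)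
      = (simplex k).indicator (fun y => G ((2⁻¹:ℝ) • y)) x := by
    intro x
    by_cases hx : (2⁻¹:ℝ) • x ∈ monoBox k 0 2⁻¹
    · rw [Set.indicator_of_mem hx, Set.indicator_of_mem (show x ∈ simplex k by
        rw [← hpre]; exact hx)]
    · rw [Set.indicator_of_notMem hx, Set.indicator_of_notMem (show x ∉ simplex k by
        rw [← hpre]; exact hx)]
  have hcs := Measure.integral_comp_smul (μ := volume)
    (fun x => (monoBox k 0 2⁻¹).indicator G x) (2⁻¹ : ℝ)
  simp_rw [hind] at hcs
  rw [integral_indicator (measurableSet_simplex k),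
    integral_indicator (measurableSet_monoBox k 0 2⁻¹), Module.finrank_fin_fun] at hcs
  have habs : |((2⁻¹:ℝ) ^ k)⁻¹| = 2 ^ k := by
    rw [abs_of_pos (by positivity), ← inv_pow, inv_inv]
  rw [habs, smul_eq_mul] at hcs
  have h2 : iintN k (fun i t => g i (t / 2) * (1 / 2))
      = (∫ x in simplex k, G ((2⁻¹:ℝ) • x)) * (2⁻¹:ℝ)^k := by
    rw [iintN, ← integral_mul_const]
    refine integral_congr_ae (Filter.Eventually.of_forall fun t => ?_)
    show (∏ i : Fin k, g i (t i / 2) * (1 / 2)) = G ((2⁻¹:ℝ) • t) * (2⁻¹:ℝ)^k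
    rw [Finset.prod_mul_distrib, Finset.prod_const, Finset.card_univ, Fintype.card_fin]
    congr 1
    · refine Finset.prod_congr rfl fun i _ => ?_
      congr 1
      simp only [Pi.smul_apply, smul_eq_mul]
      ring
    · norm_num
  have hone : (2:ℝ)^k * (2⁻¹:ℝ)^k = 1 := by
    rw [← mul_pow]; norm_num
  rw [h2, hcs, mul_comm ((2:ℝ)^k) (∫ x in monoBox k 0 2⁻¹, G x), mul_assoc, hone, mul_one]

lemma highInt (k : ℕ) (g : ℕ → ℝ → ℝ) :
    ∫ s in monoBox k 2⁻¹ 1, ∏ i : Fin k, g i (s i)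
      = iintN k (fun i t => g i ((t + 1) / 2) * (1 / 2)) := by
  set G : (Fin k → ℝ) → ℝ := fun t => ∏ i : Fin k, g i (t i) with hG
  set c : Fin k → ℝ := fun _ => (2⁻¹ : ℝ) with hc
  have hpre : (fun x : Fin k → ℝ => (2⁻¹ : ℝ) • x + c) ⁻¹' (monoBox k 2⁻¹ 1) = simplex k := by
    ext x
    simp only [monoBox, simplex, Set.mem_preimage, Set.mem_setOf_eq, Set.mem_Ioo, Pi.add_apply,
      Pi.smul_apply, smul_eq_mul, hc]
    constructor
    · rintro ⟨h1, h2⟩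
      refine ⟨fun i => ⟨by nlinarith [(h1 i).1], by nlinarith [(h1 i).2]⟩, fun a b hab => ?_⟩
      have h3 := h2 hab
      simp only [Pi.add_apply, Pi.smul_apply, smul_eq_mul, hc] at h3
      linarith
    · rintro ⟨h1, h2⟩
      refine ⟨fun i => ⟨by nlinarith [(h1 i).1], by nlinarith [(h1 i).2]⟩, fun a b hab => ?_⟩
      simp only [Pi.add_apply, Pi.smul_apply, smul_eq_mul, hc]
      have h3 := h2 hab
      linarith
  have hind : ∀ x : Fin k → ℝ, (monoBox k 2⁻¹ 1).indicator G ((2⁻¹:ℝ) • x + c)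
      = (simplex k).indicator (fun y => G ((2⁻¹:ℝ) • y + c)) x := by
    intro x
    by_cases hx : (2⁻¹:ℝ) • x + c ∈ monoBox k 2⁻¹ 1
    · rw [Set.indicator_of_mem hx, Set.indicator_of_mem (show x ∈ simplex k by
        rw [← hpre]; exact hx)]
    · rw [Set.indicator_of_notMem hx, Set.indicator_of_notMem (show x ∉ simplex k by
        rw [← hpre]; exact hx)]
  have hcs := Measure.integral_comp_smul (μ := volume)
    (fun y => (monoBox k 2⁻¹ 1).indicator G (y + c)) (2⁻¹ : ℝ)
  have htr : ∫ y : Fin k → ℝ, (monoBox k 2⁻¹ 1).indicator G (y + c)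
      = ∫ y : Fin k → ℝ, (monoBox k 2⁻¹ 1).indicator G y :=
    integral_add_right_eq_self _ c
  rw [htr] at hcs
  simp_rw [hind] at hcs
  rw [integral_indicator (measurableSet_simplex k),
    integral_indicator (measurableSet_monoBox k 2⁻¹ 1), Module.finrank_fin_fun] at hcs
  have habs : |((2⁻¹:ℝ) ^ k)⁻¹| = 2 ^ k := by
    rw [abs_of_pos (by positivity), ← inv_pow, inv_inv]
  rw [habs, smul_eq_mul] at hcs
  have h2 : iintN k (fun i t => g i ((t + 1) / 2) * (1 / 2))
      = (∫ x in simplex k, G ((2⁻¹:ℝ) • x + c)) * (2⁻¹:ℝ)^k := by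
    rw [iintN, ← integral_mul_const]
    refine integral_congr_ae (Filter.Eventually.of_forall fun t => ?_)
    show (∏ i : Fin k, g i ((t i + 1) / 2) * (1 / 2)) = G ((2⁻¹:ℝ) • t + c) * (2⁻¹:ℝ)^k
    rw [Finset.prod_mul_distrib, Finset.prod_const, Finset.card_univ, Fintype.card_fin]
    congr 1
    · refine Finset.prod_congr rfl fun i _ => ?_
      congr 1
      simp only [Pi.add_apply, Pi.smul_apply, smul_eq_mul, hc]
      ring
    · norm_num
  have hone : (2:ℝ)^k * (2⁻¹:ℝ)^k = 1 := by
    rw [← mul_pow]; norm_num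
  rw [h2, hcs, mul_comm ((2:ℝ)^k) (∫ x in monoBox k 2⁻¹ 1, G x), mul_assoc, hone, mul_one]

lemma integrableOn_prodF (n : ℕ) (f : ℕ → ℝ → ℝ) (hf : ∀ i, Continuous (f i))
    (s : Set (Fin n → ℝ)) (hs : s ⊆ Set.pi Set.univ (fun _ => Set.Icc (0:ℝ) 1)) :
    IntegrableOn (fun t : Fin n → ℝ => ∏ i : Fin n, f i (t i)) s := by
  have hc : Continuous fun t : Fin n → ℝ => ∏ i : Fin n, f i (t i) :=
    continuous_finset_prod _ fun i _ => (hf i).comp (continuous_apply i)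
  have hcomp : IsCompact (Set.pi Set.univ fun _ : Fin n => Set.Icc (0:ℝ) 1) :=
    isCompact_univ_pi fun _ => isCompact_Icc
  exact (hc.continuousOn.integrableOn_compact hcomp).mono_set hs

end Aux

/-- Composition-of-paths formula for iterated integrals (Chen): for the concatenation
at `t = 1/2`, `I(f₁,…,f_n) = Σ_{k=0}^n I(a₁,…,a_k)·I(b_{k+1},…,b_n)` where
`a_i(t) = f_i(t/2)·(1/2)` and `b_i(t) = f_i((t+1)/2)·(1/2)` are the pullbacks under
the two halves of the concatenation. -/
theorem iterated_integral_concatenation (n : ℕ) (f : ℕ → ℝ → ℝ)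
    (hf : ∀ i, Continuous (f i)) :
    iintN n f =
      ∑ k ∈ Finset.range (n + 1),
        iintN k (fun i t => f i (t / 2) * (1 / 2)) *
          iintN (n - k) (fun i t => f (k + i) ((t + 1) / 2) * (1 / 2)) := by
  have hsub : ∀ k, cutSet n k ⊆ Set.pi Set.univ (fun _ => Set.Icc (0:ℝ) 1) := by
    intro k t ht i _
    exact ⟨(ht.1.1 i).1.le, (ht.1.1 i).2.le⟩
  rw [iintN, simplex_eq_biUnion n,
    integral_biUnion_finset (Finset.range (n+1)) (fun k _ => measurableSet_cutSet n k)
      (cutSet_disjoint n) (fun k _ => integrableOn_prodF n f hf _ (hsub k))]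
  refine Finset.sum_congr rfl fun k hk => ?_
  rw [Finset.mem_range] at hk
  obtain ⟨m, rfl⟩ : ∃ m, n = k + m := ⟨n - k, by omega⟩
  rw [Nat.add_sub_cancel_left]
  rw [setIntegral_congr_set (cutSet_ae_eq k m), Bset_integral k m f, lowInt k f,
    highInt m (fun j => f (k + j))]
end

section
/- Let f₁, f₂, g : [0,1] → ℝ be continuous. Then (∫_{0<t₁<t₂<1} f₁(t₁)f₂(t₂))·(∫₀¹ g) = I(g,f₁,f₂) + I(f₁,g,f₂) + I(f₁,f₂,g), where I(h₁,h₂,h₃) = ∫_{0<t₁<t₂<t₃<1} h₁(t₁)h₂(t₂)h₃(t₃) dt₁dt₂dt₃. -/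
open MeasureTheory

lemma sm2 {s : Fin 2 → ℝ} : StrictMono s ↔ s 0 < s 1 := by
  rw [Fin.strictMono_iff_lt_succ]
  constructor
  · intro h; simpa using h 0
  · intro h i; fin_cases i; simpa using h

lemma sm3 {t : Fin 3 → ℝ} : StrictMono t ↔ t 0 < t 1 ∧ t 1 < t 2 := by
  rw [Fin.strictMono_iff_lt_succ]
  constructor
  · intro h; exact ⟨by simpa using h 0, by simpa using h 1⟩
  · rintro ⟨h1, h2⟩ i; fin_cases i <;> simpa

lemma forall_fin3 {P : Fin 3 → Prop} : (∀ i, P i) ↔ P 0 ∧ P 1 ∧ P 2 :=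
  ⟨fun h => ⟨h 0, h 1, h 2⟩, fun ⟨a, b, c⟩ i => by fin_cases i <;> assumption⟩

lemma null_eq (i j : Fin 3) (h : i ≠ j) :
    (volume : Measure (Fin 3 → ℝ)) {u | u i = u j} = 0 := by
  have hs : {u : Fin 3 → ℝ | u i = u j} =
      (LinearMap.ker ((LinearMap.proj i : (Fin 3 → ℝ) →ₗ[ℝ] ℝ) - LinearMap.proj j) : Set _) := by
    ext u
    simp [LinearMap.mem_ker, sub_eq_zero, eq_comm]
  rw [hs]
  apply Measure.addHaar_submodule
  intro htop
  have : (Pi.single i 1 : Fin 3 → ℝ) ∈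
      LinearMap.ker ((LinearMap.proj i : (Fin 3 → ℝ) →ₗ[ℝ] ℝ) - LinearMap.proj j) := by
    rw [htop]; trivial
  simp [LinearMap.mem_ker, Pi.single_apply, h, h.symm] at this

lemma perm_transfer (F : (Fin 3 → ℝ) → ℝ) (σ : Fin 3 ≃ Fin 3) (S : Set (Fin 3 → ℝ)) :
    ∫ u in S, F u = ∫ t in {t : Fin 3 → ℝ | (fun a => t (σ a)) ∈ S}, F (fun a => t (σ a)) := by
  have hmp := (volume_measurePreserving_piCongrLeft (fun _ : Fin 3 => ℝ) σ).symm
    (MeasurableEquiv.piCongrLeft (fun _ : Fin 3 => ℝ) σ)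
  have h := hmp.setIntegral_preimage_emb (MeasurableEquiv.measurableEmbedding _) F S
  rw [← h]; rfl

/-- the cyclic permutation 0↦1↦2↦0 -/
def c3 : Fin 3 ≃ Fin 3 :=
  ⟨fun i => ![1, 2, 0] i, fun i => ![2, 0, 1] i, by decide, by decide⟩

/-- the transposition 1↔2 -/
def s12 : Fin 3 ≃ Fin 3 :=
  ⟨fun i => ![0, 2, 1] i, fun i => ![0, 2, 1] i, by decide, by decide⟩

/-- The `(2,1)`-shuffle relation:
`I(f₁,f₂)·(∫₀¹ g) = I(g,f₁,f₂) + I(f₁,g,f₂) + I(f₁,f₂,g)`. -/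
theorem shuffle_two_one (f₁ f₂ g : ℝ → ℝ)
    (hf₁ : Continuous f₁) (hf₂ : Continuous f₂) (hg : Continuous g) :
    iint 2 ![f₁, f₂] * (∫ t in Set.Ioo (0 : ℝ) 1, g t) =
      iint 3 ![g, f₁, f₂] + iint 3 ![f₁, g, f₂] + iint 3 ![f₁, f₂, g] := by
  classical
  set F : (Fin 3 → ℝ) → ℝ := fun u => g (u 2) * (f₁ (u 0) * f₂ (u 1)) with hFdef
  have hFc : Continuous F :=
    (hg.comp (continuous_apply 2)).mul
      ((hf₁.comp (continuous_apply 0)).mul (hf₂.comp (continuous_apply 1)))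
  set A : Set (Fin 3 → ℝ) :=
    {u | ((0 < u 0 ∧ u 0 < 1) ∧ (0 < u 1 ∧ u 1 < 1) ∧ (0 < u 2 ∧ u 2 < 1)) ∧ u 0 < u 1} with hAdef
  set A₀ : Set (Fin 3 → ℝ) := A ∩ {u | u 2 < u 0} with hA0def
  set A₁ : Set (Fin 3 → ℝ) := A ∩ {u | u 0 < u 2 ∧ u 2 < u 1} with hA1def
  set A₂ : Set (Fin 3 → ℝ) := A ∩ {u | u 1 < u 2} with hA2def
  -- measurability
  have mlt : ∀ i j : Fin 3, MeasurableSet {u : Fin 3 → ℝ | u i < u j} := fun i j =>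
    measurableSet_lt (measurable_pi_apply i) (measurable_pi_apply j)
  have mgt : ∀ (i : Fin 3) (c : ℝ), MeasurableSet {u : Fin 3 → ℝ | c < u i} := fun i c =>
    measurableSet_lt measurable_const (measurable_pi_apply i)
  have mlt' : ∀ (i : Fin 3) (c : ℝ), MeasurableSet {u : Fin 3 → ℝ | u i < c} := fun i c =>
    measurableSet_lt (measurable_pi_apply i) measurable_const
  have hmA : MeasurableSet A := by
    have : A = ({u : Fin 3 → ℝ | 0 < u 0} ∩ {u | u 0 < 1} ∩ ({u | 0 < u 1} ∩ {u | u 1 < 1})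
        ∩ ({u | 0 < u 2} ∩ {u | u 2 < 1})) ∩ {u | u 0 < u 1} := by
      ext u; simp [hAdef]; tauto
    rw [this]
    exact ((((mgt 0 0).inter (mlt' 0 1)).inter ((mgt 1 0).inter (mlt' 1 1))).inter
      ((mgt 2 0).inter (mlt' 2 1))).inter (mlt 0 1)
  have hmA0 : MeasurableSet A₀ := hmA.inter (mlt 2 0)
  have hmA1 : MeasurableSet A₁ := hmA.inter ((mlt 0 2).inter (mlt 2 1))
  have hmA2 : MeasurableSet A₂ := hmA.inter (mlt 1 2)
  -- integrability
  have hK : IsCompact (Set.pi Set.univ fun _ : Fin 3 => Set.Icc (0 : ℝ) 1) :=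
    isCompact_univ_pi fun _ => isCompact_Icc
  have hIK : IntegrableOn F (Set.pi Set.univ fun _ : Fin 3 => Set.Icc (0 : ℝ) 1) :=
    hFc.continuousOn.integrableOn_compact hK
  have hAsub : A ⊆ Set.pi Set.univ fun _ : Fin 3 => Set.Icc (0 : ℝ) 1 := by
    intro u hu
    obtain ⟨⟨h0, h1, h2⟩, -⟩ := hu
    intro i _
    fin_cases i
    · exact ⟨le_of_lt h0.1, le_of_lt h0.2⟩
    · exact ⟨le_of_lt h1.1, le_of_lt h1.2⟩
    · exact ⟨le_of_lt h2.1, le_of_lt h2.2⟩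
  have hIA : IntegrableOn F A := hIK.mono_set hAsub
  have hIA0 : IntegrableOn F A₀ := hIA.mono_set Set.inter_subset_left
  have hIA1 : IntegrableOn F A₁ := hIA.mono_set Set.inter_subset_left
  have hIA2 : IntegrableOn F A₂ := hIA.mono_set Set.inter_subset_left
  -- LHS = ∫ over A of F
  have hLHS : iint 2 ![f₁, f₂] * (∫ t in Set.Ioo (0 : ℝ) 1, g t) = ∫ u in A, F u := by
    have h2 : iint 2 ![f₁, f₂] = ∫ s in simplex 2, f₁ (s 0) * f₂ (s 1) := by
      simp [iint, Fin.prod_univ_two]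
    rw [h2, mul_comm, ← setIntegral_prod_mul g (fun s : Fin 2 → ℝ => f₁ (s 0) * f₂ (s 1))
      (Set.Ioo (0:ℝ) 1) (simplex 2), ← Measure.volume_eq_prod]
    have hmp := volume_preserving_piFinSuccAbove (fun _ : Fin 3 => ℝ) 2
    have h := hmp.setIntegral_preimage_emb (MeasurableEquiv.measurableEmbedding _)
      (fun z : ℝ × (Fin 2 → ℝ) => g z.1 * (f₁ (z.2 0) * f₂ (z.2 1)))
      (Set.Ioo (0:ℝ) 1 ×ˢ simplex 2)
    rw [← h]
    have hset : (MeasurableEquiv.piFinSuccAbove (fun _ : Fin 3 => ℝ) 2) ⁻¹'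
        (Set.Ioo (0:ℝ) 1 ×ˢ simplex 2) = A := by
      ext u
      simp only [Set.mem_preimage, Set.mem_prod, Set.mem_Ioo, hAdef, Set.mem_setOf_eq]
      constructor
      · rintro ⟨h2', hio, hmono⟩
        have e0 := hio 0
        have e1 := hio 1
        rw [sm2] at hmono
        exact ⟨⟨⟨e0.1, e0.2⟩, ⟨e1.1, e1.2⟩, h2'⟩, hmono⟩
      · rintro ⟨⟨h0, h1, h2'⟩, hlt⟩
        refine ⟨h2', ?_, ?_⟩
        · intro i; fin_cases i
          · exact ⟨h0.1, h0.2⟩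
          · exact ⟨h1.1, h1.2⟩
        · rw [sm2]; exact hlt
    rw [hset]; rfl
  rw [hLHS]
  -- decompose A a.e. into A₀ ∪ A₁ ∪ A₂
  have hae : A =ᵐ[volume] ((A₀ ∪ A₁ ∪ A₂ : Set (Fin 3 → ℝ))) := by
    rw [MeasureTheory.ae_eq_set]
    constructor
    · refine measure_mono_null ?_
        (measure_union_null (μ := volume) (null_eq 2 0 (by decide)) (null_eq 2 1 (by decide)))
      intro u hu
      obtain ⟨huA, hun⟩ := hu
      by_contra hc
      simp only [Set.mem_union, Set.mem_setOf_eq, not_or] at hc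
      apply hun
      rcases lt_trichotomy (u 2) (u 0) with h | h | h
      · exact Or.inl (Or.inl ⟨huA, h⟩)
      · exact absurd h hc.1
      · rcases lt_trichotomy (u 2) (u 1) with h' | h' | h'
        · exact Or.inl (Or.inr ⟨huA, h, h'⟩)
        · exact absurd h' hc.2
        · exact Or.inr ⟨huA, h'⟩
    · refine measure_mono_null ?_ (measure_empty (μ := volume))
      intro u hu
      obtain ⟨h1, h2⟩ := hu
      refine absurd ?_ h2
      simp only [Set.mem_union] at h1
      rcases h1 with (h | h) | h
      · exact h.1
      · exact h.1
      · exact h.1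
  rw [setIntegral_congr_set hae,
    setIntegral_union ?disj2 hmA2 (hIA0.union hIA1) hIA2,
    setIntegral_union ?disj1 hmA1 hIA0 hIA1]
  case disj1 =>
    rw [Set.disjoint_left]
    rintro u ⟨⟨⟨-, -, -⟩, -⟩, h20⟩ ⟨-, h02, -⟩
    exact absurd (lt_trans h20 h02) (lt_irrefl _)
  case disj2 =>
    rw [Set.disjoint_left]
    rintro u hu ⟨⟨⟨-, -, -⟩, h01⟩, h12⟩
    rcases hu with ⟨-, h20⟩ | ⟨-, -, h21⟩
    · exact absurd (lt_trans (lt_trans h12 h20) h01) (lt_irrefl _)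
    · exact absurd (lt_trans h12 h21) (lt_irrefl _)
  -- identify each piece
  have hsetA2 : A₂ = simplex 3 := by
    ext u
    simp only [hA2def, hAdef, Set.mem_inter_iff, Set.mem_setOf_eq, simplex, sm3,
      forall_fin3, Set.mem_Ioo]
    tauto
  have hmS3 : MeasurableSet (simplex 3) := hsetA2 ▸ hmA2
  have hp0 : ∫ u in A₀, F u = iint 3 ![g, f₁, f₂] := by
    rw [perm_transfer F c3 A₀]
    have hset : {t : Fin 3 → ℝ | (fun a => t (c3 a)) ∈ A₀} = simplex 3 := by
      ext t
      simp only [Set.mem_setOf_eq, hA0def, hAdef, Set.mem_inter_iff, Set.mem_setOf_eq,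
        simplex, sm3, forall_fin3, Set.mem_Ioo, c3]
      simp only [Equiv.coe_fn_mk, Matrix.cons_val_zero, Matrix.cons_val_one, Matrix.head_cons,
        Matrix.cons_val_two, Matrix.tail_cons]
      tauto
    rw [hset]
    simp only [iint, Fin.prod_univ_three, Matrix.cons_val_zero, Matrix.cons_val_one,
      Matrix.head_cons, Matrix.cons_val_two, Matrix.tail_cons]
    apply setIntegral_congr_fun hmS3
    intro t _
    simp only [hFdef, c3, Equiv.coe_fn_mk, Matrix.cons_val_zero, Matrix.cons_val_one,
      Matrix.head_cons, Matrix.cons_val_two, Matrix.tail_cons]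
    ring
  have hp1 : ∫ u in A₁, F u = iint 3 ![f₁, g, f₂] := by
    rw [perm_transfer F s12 A₁]
    have hset : {t : Fin 3 → ℝ | (fun a => t (s12 a)) ∈ A₁} = simplex 3 := by
      ext t
      simp only [Set.mem_setOf_eq, hA1def, hAdef, Set.mem_inter_iff, Set.mem_setOf_eq,
        simplex, sm3, forall_fin3, Set.mem_Ioo, s12]
      simp only [Equiv.coe_fn_mk, Matrix.cons_val_zero, Matrix.cons_val_one, Matrix.head_cons,
        Matrix.cons_val_two, Matrix.tail_cons]
      constructor
      · rintro ⟨⟨⟨h0, h2, h1⟩, -⟩, h01, h12⟩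
        exact ⟨⟨h0, h1, h2⟩, h01, h12⟩
      · rintro ⟨⟨h0, h1, h2⟩, h01, h12⟩
        exact ⟨⟨⟨h0, h2, h1⟩, h01.trans h12⟩, h01, h12⟩
    rw [hset]
    simp only [iint, Fin.prod_univ_three, Matrix.cons_val_zero, Matrix.cons_val_one,
      Matrix.head_cons, Matrix.cons_val_two, Matrix.tail_cons]
    apply setIntegral_congr_fun hmS3
    intro t _
    simp only [hFdef, s12, Equiv.coe_fn_mk, Matrix.cons_val_zero, Matrix.cons_val_one,
      Matrix.head_cons, Matrix.cons_val_two, Matrix.tail_cons]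
    ring
  have hp2 : ∫ u in A₂, F u = iint 3 ![f₁, f₂, g] := by
    rw [hsetA2]
    simp only [iint, Fin.prod_univ_three, Matrix.cons_val_zero, Matrix.cons_val_one,
      Matrix.head_cons, Matrix.cons_val_two, Matrix.tail_cons]
    apply setIntegral_congr_fun hmS3
    intro t _
    simp only [hFdef]
    ring
  rw [hp0, hp1, hp2]
end
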